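/- In the chain MDP with parameters n ∈ ℕ and γ ∈ (0,1), fix t with 0 ≤ t ≤ n and let v_t be the function with v_t(s_i) = γ^{n−i} for n+1−t ≤ i ≤ n and v_t(s) = 0 for all other states. Then the greedy policy with respect to v_t — the policy that at each state s selects the action a maximizing r(s,a) + γ·v_t(f(s,a)), choosing d in case of a tie — plays u exactly on the states s_i with n−t ≤ i ≤ n. -/

import Mathlib

/-! Below `s_n`, action `d` leads to the absorbing state `s_{n+1}`, where `v_t` vanishes, while
`u` leads to `s_{i+1}`; so `u` is greedy at `s_i` exactly when `v_t(s_{i+1}) > 0`. At `s_n`, `u`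
earns `1 - γ + γ v_t(s_n) > 0` against `0`, and at `s_{n+1}` both actions tie. -/

/-- States of the chain MDP with parameters `n`: `s_0, …, s_{n+1}`, where `s_{n+1}`
is absorbing. Actions: `true = u`, `false = d`. -/
def chainStep (n : ℕ) (s : Fin (n + 2)) (a : Bool) : Fin (n + 2) :=
  if a then (if h : s.val < n then ⟨s.val + 1, by omega⟩ else s) else ⟨n + 1, by omega⟩

/-- Reward of the chain MDP: `r(s_n, u) = 1 - γ` and `0` otherwise. -/
def chainReward (n : ℕ) (γ : ℝ) (s : Fin (n + 2)) (a : Bool) : ℝ :=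
  if s.val = n ∧ a = true then 1 - γ else 0

/-- The greedy policy w.r.t. a value function `v`: at each state pick the action
maximizing `r(s,a) + γ·v(f(s,a))`, choosing `d` (= `false`) in case of a tie. -/
noncomputable def chainGreedy (n : ℕ) (γ : ℝ) (v : Fin (n + 2) → ℝ) (s : Fin (n + 2)) : Bool :=
  if chainReward n γ s true + γ * v (chainStep n s true) >
     chainReward n γ s false + γ * v (chainStep n s false) then true else false

section ChainMDP

variable {n : ℕ} {γ : ℝ} {v : Fin (n + 2) → ℝ} {s : Fin (n + 2)}

@[simp]
theorem chainStep_false : chainStep n s false = Fin.last (n + 1) := rfl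

theorem chainStep_true_of_lt (hs : s.val < n) : chainStep n s true = ⟨s.val + 1, by omega⟩ := by
  simp [chainStep, hs]

theorem chainStep_true_of_not_lt (hs : ¬ s.val < n) : chainStep n s true = s := by
  simp [chainStep, hs]

@[simp]
theorem chainReward_false : chainReward n γ s false = 0 := by
  simp [chainReward]

theorem chainReward_true : chainReward n γ s true = if s.val = n then 1 - γ else 0 := by
  simp [chainReward]

theorem chainGreedy_eq_true_iff :
    chainGreedy n γ v s = true ↔
      γ * v (Fin.last (n + 1)) < chainReward n γ s true + γ * v (chainStep n s true) := by
  simp [chainGreedy]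

theorem chainGreedy_eq_true_iff_of_lt (hγ : 0 < γ) (hs : s.val < n) :
    chainGreedy n γ v s = true ↔ v (Fin.last (n + 1)) < v ⟨s.val + 1, by omega⟩ := by
  rw [chainGreedy_eq_true_iff, chainStep_true_of_lt hs, chainReward_true, if_neg hs.ne, zero_add,
    mul_lt_mul_iff_right₀ hγ]

theorem chainGreedy_eq_true_iff_of_eq (hs : s.val = n) :
    chainGreedy n γ v s = true ↔ γ * v (Fin.last (n + 1)) < 1 - γ + γ * v s := by
  rw [chainGreedy_eq_true_iff, chainStep_true_of_not_lt (by omega), chainReward_true, if_pos hs]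

theorem chainGreedy_last : chainGreedy n γ v (Fin.last (n + 1)) = false := by
  rw [Bool.eq_false_iff, ne_eq, chainGreedy_eq_true_iff, chainStep_true_of_not_lt (by simp),
    chainReward_true, if_neg (by simp), zero_add]
  exact lt_irrefl _

end ChainMDP

theorem ite_pow_pos_iff {γ : ℝ} (hγ : 0 < γ) (p : Prop) [Decidable p] (k : ℕ) :
    0 < (if p then γ ^ k else 0) ↔ p := by
  split_ifs with hp <;> simp [hp, pow_pos hγ k]

theorem chain_greedy_of_value_general (n : ℕ) (γ : ℝ) (hγ₀ : 0 < γ) (hγ₁ : γ < 1)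
    (t : ℕ)
    (v : Fin (n + 2) → ℝ)
    (hv : ∀ i : Fin (n + 2),
      v i = if n + 1 - t ≤ i.val ∧ i.val ≤ n then γ ^ (n - i.val) else 0) :
    ∀ s : Fin (n + 2), chainGreedy n γ v s = true ↔ (n - t ≤ s.val ∧ s.val ≤ n) := by
  intro s
  have hpos : ∀ i, 0 < v i ↔ n + 1 - t ≤ i.val ∧ i.val ≤ n := fun i => by
    rw [hv]; exact ite_pow_pos_iff hγ₀ _ _
  have hnonneg : ∀ i, 0 ≤ v i := fun i => by rw [hv]; positivity
  have hlast : v (Fin.last (n + 1)) = 0 := by rw [hv]; simp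
  rcases lt_trichotomy s.val n with hs | hs | hs
  · rw [chainGreedy_eq_true_iff_of_lt hγ₀ hs, hlast, hpos, Fin.val_mk]
    -- `n + 1 - t ≤ s + 1 ↔ n - t ≤ s` survives truncated subtraction
    omega
  · rw [chainGreedy_eq_true_iff_of_eq hs, hlast]
    exact iff_of_true (by nlinarith [hnonneg s]) ⟨by omega, hs.le⟩
  · obtain rfl : s = Fin.last (n + 1) := Fin.ext (by simp; omega)
    simp [chainGreedy_last]

/-- Given the value function `v_t` (equal to `γ^(n-i)` on states `s_i` with
`n+1-t ≤ i ≤ n` and `0` elsewhere), the greedy policy w.r.t. `v_t` plays `u` exactly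
on the states `s_i` with `n-t ≤ i ≤ n`. -/
theorem chain_greedy_of_value (n : ℕ) (γ : ℝ) (hγ₀ : 0 < γ) (hγ₁ : γ < 1)
    (t : ℕ) (ht : t ≤ n)
    (v : Fin (n + 2) → ℝ)
    (hv : ∀ i : Fin (n + 2),
      v i = if n + 1 - t ≤ i.val ∧ i.val ≤ n then γ ^ (n - i.val) else 0) :
    ∀ s : Fin (n + 2), chainGreedy n γ v s = true ↔ (n - t ≤ s.val ∧ s.val ≤ n) :=
  chain_greedy_of_value_general n γ hγ₀ hγ₁ t v hv
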